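/- arXiv:1607.08852 — 3 statements merged into one kernel-verified Lean document; each statement's English description precedes it below -/
import Mathlib

section
/- Let ε ∈ (0,1], M > 0, ρ ∈ [ε, M], N = ⌊ρ/ε⌋ ≥ 1 with (N+1)ε ≤ M, and η_ε(v) = k for v ∈ [(k-1)ε, kε). Let f : [0,M] → [0,1] be measurable with ∫₀^M f dv = ρ, and let f_min : [0,M] → [0,1] be a minimizer of ∫ η_ε g dv over {g : [0,M] → [0,1], ∫ g = ρ} of the form f_min = 𝟙_{[0,Nε]} + f̃, where f̃ is supported in [Nε,(N+1)ε], takes values in [0,1], has ∫ f̃ = ρ - Nε, and satisfies f_min(v) ≥ f(v) for v ∈ [Nε,(N+1)ε]. Then ∫₀^M |f - f_min| dv ≤ (3/ε) ∫₀^M η_ε (f - f_min) dv. -/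
/-!
Let `g = f - fmin`. Since `fmin ≥ f` on `[0, (N+1)ε]` and `fmin = 0` beyond, `g ≤ 0` on
`[0, (N+1)ε]`, where `η ≤ N + 1` except at the right endpoint, and `g ≥ 0` beyond, where
`η ≥ N + 2`. So `(η - (N+1)) g ≥ g⁺` almost everywhere, and since `∫ g = 0`,
`∫ |g| = 2 ∫ g⁺ ≤ 2 ∫ (η - (N+1)) g = 2 ∫ η g ≤ (3/ε) ∫ η g`.
-/

open MeasureTheory Set

lemma abs_le_two_mul_mul_sub {x y c : ℝ} (hneg : x < 0 → y ≤ c) (hpos : 0 < x → c + 1 ≤ y) :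
    |x| ≤ 2 * (y * x) - (2 * c + 1) * x := by
  rcases lt_trichotomy x 0 with hx | rfl | hx
  · rw [abs_of_neg hx]; nlinarith [hneg hx]
  · simp
  · rw [abs_of_pos hx]; nlinarith [hpos hx]

theorem integral_abs_le_two_mul_integral_mul {α : Type*} [MeasurableSpace α] {μ : Measure α}
    {g w : α → ℝ} (c : ℝ) (hg : Integrable g μ) (hwg : Integrable (fun x => w x * g x) μ)
    (hg0 : ∫ x, g x ∂μ = 0) (hsign : ∀ᵐ x ∂μ, (g x < 0 → w x ≤ c) ∧ (0 < g x → c + 1 ≤ w x)) :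
    ∫ x, |g x| ∂μ ≤ 2 * ∫ x, w x * g x ∂μ :=
  calc ∫ x, |g x| ∂μ ≤ ∫ x, 2 * (w x * g x) - (2 * c + 1) * g x ∂μ :=
        integral_mono_ae hg.abs ((hwg.const_mul 2).sub (hg.const_mul _))
          (hsign.mono fun _ hx => abs_le_two_mul_mul_sub hx.1 hx.2)
    _ = 2 * ∫ x, w x * g x ∂μ := by
        rw [integral_sub (hwg.const_mul 2) (hg.const_mul _), integral_const_mul,
          integral_const_mul, hg0, mul_zero, sub_zero]

lemma integrable_of_forall_mem_Icc {α : Type*} [MeasurableSpace α] {μ : Measure α}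
    [IsFiniteMeasure μ] {f : α → ℝ} {a b : ℝ} (hf : AEStronglyMeasurable f μ)
    (h : ∀ x, f x ∈ Icc a b) : Integrable f μ :=
  .of_bound hf (max |a| |b|) (ae_of_all _ fun x => abs_le_max_abs_abs (h x).1 (h x).2)

section Floor

variable {ε v : ℝ} {n : ℕ}

lemma floor_div_le_of_lt (hε : 0 < ε) (h : v < (n + 1) * ε) : (⌊v / ε⌋ : ℝ) ≤ n := by
  exact_mod_cast Int.floor_le_iff.2 (by rwa [Int.cast_natCast, div_lt_iff₀ hε])

lemma add_one_le_floor_div (hε : 0 < ε) (h : (n + 1) * ε ≤ v) : (n : ℝ) + 1 ≤ ⌊v / ε⌋ := by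
  exact_mod_cast Int.le_floor.2 (by push_cast; rwa [le_div_iff₀ hε])

lemma monotone_floor_div (hε : 0 < ε) : Monotone fun v : ℝ => (⌊v / ε⌋ : ℝ) :=
  fun _ _ h => Int.cast_mono (Int.floor_le_floor (div_le_div_of_nonneg_right h hε.le))

end Floor

section Profile

variable {a b : ℝ} {f ftil fmin : ℝ → ℝ}
  (hfmin : ∀ v, fmin v = (Icc 0 a).indicator (fun _ => 1) v + ftil v)
include hfmin

lemma lt_of_profile_lt (hdom : ∀ v ∈ Icc a b, f v ≤ fmin v) {v : ℝ} (hv : 0 ≤ v)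
    (hf : f v ≤ 1) (hftil : 0 ≤ ftil v) (h : fmin v < f v) : b < v := by
  by_contra! hvb
  rcases le_or_gt v a with hva | hva
  · rw [hfmin, indicator_of_mem (mem_Icc.2 ⟨hv, hva⟩)] at h
    linarith
  · linarith [hdom v ⟨hva.le, hvb⟩]

lemma le_of_lt_profile (hab : a ≤ b) (hsupp : ∀ v, v ∉ Icc a b → ftil v = 0) {v : ℝ}
    (hf : 0 ≤ f v) (h : f v < fmin v) : v ≤ b := by
  by_contra! hvb
  rw [hfmin, indicator_of_notMem fun h => by linarith [h.2],
    hsupp v fun h => by linarith [h.2], add_zero] at h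
  linarith

lemma integral_profile {M : ℝ} (ha : 0 ≤ a) (haM : a ≤ M)
    (hftil : IntegrableOn ftil (Icc 0 M)) :
    ∫ v in Icc 0 M, fmin v = a + ∫ v in Icc 0 M, ftil v := by
  have hind : IntegrableOn ((Icc 0 a).indicator fun _ => (1 : ℝ)) (Icc 0 M) :=
    (integrableOn_const measure_Icc_lt_top.ne).indicator measurableSet_Icc
  simp_rw [hfmin]
  rw [integral_add hind hftil, integral_indicator_const _ measurableSet_Icc,
    measureReal_restrict_apply measurableSet_Icc, inter_eq_left.2 (Icc_subset_Icc_right haM),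
    Real.volume_real_Icc_of_le ha, sub_zero, smul_eq_mul, mul_one]

end Profile

theorem stmt_2_general (ε M ρ : ℝ) (hε : 0 < ε) (hε1 : ε ≤ 1)
    (N : ℕ) (hNM : ((N : ℝ) + 1) * ε ≤ M)
    (η : ℝ → ℝ) (hη : ∀ v, η v = (⌊v / ε⌋ : ℝ) + 1)
    (f : ℝ → ℝ) (hfmeas : Measurable f) (hf01 : ∀ v, f v ∈ Icc (0 : ℝ) 1)
    (hfmass : (∫ v in Icc (0 : ℝ) M, f v) = ρ)
    (ftil : ℝ → ℝ) (hftilmeas : Measurable ftil)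
    (hftil01 : ∀ v, ftil v ∈ Icc (0 : ℝ) 1)
    (hftilsupp : ∀ v, v ∉ Icc ((N : ℝ) * ε) (((N : ℝ) + 1) * ε) → ftil v = 0)
    (hftilmass : (∫ v in Icc (0 : ℝ) M, ftil v) = ρ - N * ε)
    (fmin : ℝ → ℝ)
    (hfmin : ∀ v, fmin v = (Icc (0 : ℝ) ((N : ℝ) * ε)).indicator (fun _ => (1 : ℝ)) v + ftil v)
    (hfmin01 : ∀ v, fmin v ∈ Icc (0 : ℝ) 1)
    (hdom : ∀ v ∈ Icc ((N : ℝ) * ε) (((N : ℝ) + 1) * ε), f v ≤ fmin v) :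
    (∫ v in Icc (0 : ℝ) M, |f v - fmin v|)
      ≤ (3 / ε) * ∫ v in Icc (0 : ℝ) M, η v * (f v - fmin v) := by
  obtain rfl : η = fun v => (⌊v / ε⌋ : ℝ) + 1 := funext hη
  set μ := volume.restrict (Icc (0 : ℝ) M)
  have hNε : (N : ℝ) * ε ≤ ((N : ℝ) + 1) * ε := by nlinarith
  have hfI : Integrable f μ := integrable_of_forall_mem_Icc hfmeas.aestronglyMeasurable hf01
  have hfminI : Integrable fmin μ := integrable_of_forall_mem_Icc (by
    rw [funext hfmin]
    exact ((measurable_const.indicator measurableSet_Icc).add hftilmeas).aestronglyMeasurable)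
    hfmin01
  have hηI : Integrable (fun v => (⌊v / ε⌋ : ℝ) + 1) μ :=
    ((monotone_floor_div hε).add_const 1).locallyIntegrable.integrableOn_isCompact isCompact_Icc
  have hgI : Integrable (fun v => f v - fmin v) μ := hfI.sub hfminI
  have hηgI := hηI.mul_bdd hgI.aestronglyMeasurable (c := 1) (ae_of_all _ fun v =>
    abs_sub_le_iff.2 ⟨by linarith [(hf01 v).2, (hfmin01 v).1],
      by linarith [(hf01 v).1, (hfmin01 v).2]⟩)
  have hmass : ∫ v, f v - fmin v ∂μ = 0 := by
    rw [integral_sub hfI hfminI, hfmass, integral_profile hfmin (by positivity) (hNε.trans hNM)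
      (integrable_of_forall_mem_Icc hftilmeas.aestronglyMeasurable hftil01), hftilmass]
    ring
  have hsign : ∀ᵐ v ∂μ, (f v - fmin v < 0 → (⌊v / ε⌋ : ℝ) + 1 ≤ N + 1) ∧
      (0 < f v - fmin v → (N : ℝ) + 1 + 1 ≤ (⌊v / ε⌋ : ℝ) + 1) := by
    filter_upwards [ae_restrict_mem measurableSet_Icc, μ.ae_ne (((N : ℝ) + 1) * ε)]
      with v hv hvb
    refine ⟨fun hneg => ?_, fun hpos => ?_⟩
    · have hvb' := (le_of_lt_profile hfmin hNε hftilsupp (hf01 v).1 (by linarith)).lt_of_ne hvb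
      linarith [floor_div_le_of_lt hε hvb']
    · have hvb' := lt_of_profile_lt hfmin hdom hv.1 (hf01 v).2 (hftil01 v).1 (by linarith)
      linarith [add_one_le_floor_div hε hvb'.le]
  have key := integral_abs_le_two_mul_integral_mul _ hgI hηgI hmass hsign
  have habs : 0 ≤ ∫ v, |f v - fmin v| ∂μ := integral_nonneg fun v => abs_nonneg _
  refine key.trans (mul_le_mul_of_nonneg_right ?_ (by linarith))
  rw [le_div_iff₀ hε]
  linarith

theorem stmt_2 (ε M ρ : ℝ) (hε : 0 < ε) (hε1 : ε ≤ 1) (hM : 0 < M) (hρ : ρ ∈ Icc ε M)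
    (N : ℕ) (hN : (N : ℤ) = ⌊ρ / ε⌋) (hN1 : 1 ≤ N) (hNM : ((N : ℝ) + 1) * ε ≤ M)
    (η : ℝ → ℝ) (hη : ∀ v, η v = (⌊v / ε⌋ : ℝ) + 1)
    (f : ℝ → ℝ) (hfmeas : Measurable f) (hf01 : ∀ v, f v ∈ Icc (0 : ℝ) 1)
    (hfmass : (∫ v in Icc (0 : ℝ) M, f v) = ρ)
    (ftil : ℝ → ℝ) (hftilmeas : Measurable ftil)
    (hftil01 : ∀ v, ftil v ∈ Icc (0 : ℝ) 1)
    (hftilsupp : ∀ v, v ∉ Icc ((N : ℝ) * ε) (((N : ℝ) + 1) * ε) → ftil v = 0)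
    (hftilmass : (∫ v in Icc (0 : ℝ) M, ftil v) = ρ - N * ε)
    (fmin : ℝ → ℝ)
    (hfmin : ∀ v, fmin v = (Icc (0 : ℝ) ((N : ℝ) * ε)).indicator (fun _ => (1 : ℝ)) v + ftil v)
    (hfmin01 : ∀ v, fmin v ∈ Icc (0 : ℝ) 1)
    (hmin : ∀ g : ℝ → ℝ, Measurable g → (∀ v, g v ∈ Icc (0 : ℝ) 1) →
      (∫ v in Icc (0 : ℝ) M, g v) = ρ →
      (∫ v in Icc (0 : ℝ) M, η v * fmin v) ≤ ∫ v in Icc (0 : ℝ) M, η v * g v)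
    (hdom : ∀ v ∈ Icc ((N : ℝ) * ε) (((N : ℝ) + 1) * ε), f v ≤ fmin v) :
    (∫ v in Icc (0 : ℝ) M, |f v - fmin v|)
      ≤ (3 / ε) * ∫ v in Icc (0 : ℝ) M, η v * (f v - fmin v) :=
  stmt_2_general ε M ρ hε hε1 N hNM η hη f hfmeas hf01 hfmass ftil hftilmeas hftil01 hftilsupp
    hftilmass fmin hfmin hfmin01 hdom
end

section
/- Let M > 0, ε > 0, ρ ∈ [ε, M-ε], and let f : [0,M] → [0,1] be measurable with ∫₀^M f dv = ρ, f(v) = 1 a.e. on (0, ρ-ε), and f(v) = 0 a.e. on (ρ+ε, M). If moreover ρ ≥ ε/2, then ∫₀^M v·(f(v) - 𝟙_{[0,ρ]}(v)) dv ≤ 4ε·∫₀^M f dv. -/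
open MeasureTheory Set

theorem stmt_5 (M ε ρ : ℝ) (hM : 0 < M) (hε : 0 < ε) (hρ : ρ ∈ Icc ε (M - ε))
    (f : ℝ → ℝ) (hfmeas : Measurable f) (hf01 : ∀ v, f v ∈ Icc (0 : ℝ) 1)
    (hfmass : (∫ v in Icc (0 : ℝ) M, f v) = ρ)
    (hlow : ∀ᵐ v ∂(volume.restrict (Ioo (0 : ℝ) (ρ - ε))), f v = 1)
    (hhigh : ∀ᵐ v ∂(volume.restrict (Ioo (ρ + ε) M)), f v = 0)
    (hρε : ε / 2 ≤ ρ) :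
    (∫ v in Icc (0 : ℝ) M, v * (f v - (Icc (0 : ℝ) ρ).indicator (fun _ => (1 : ℝ)) v))
      ≤ 4 * ε * ∫ v in Icc (0 : ℝ) M, f v := by
  obtain ⟨hρ1, hρ2⟩ := hρ
  set ind : ℝ → ℝ := (Icc (0:ℝ) ρ).indicator (fun _ => (1:ℝ)) with hind
  set g : ℝ → ℝ := fun v => v * (f v - ind v) with hg
  set h : ℝ → ℝ := (Icc (ρ-ε) (ρ+ε)).indicator (fun _ => ρ + ε) with hh
  have hρε0 : (0:ℝ) ≤ ρ + ε := by linarith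
  have hind0 : ∀ v, 0 ≤ ind v := fun v => Set.indicator_nonneg (fun _ _ => zero_le_one) v
  have hind1 : ∀ v, ind v ≤ 1 := by
    intro v; by_cases hv : v ∈ Icc (0:ℝ) ρ <;> simp [hind, hv]
  have hindmeas : Measurable ind := measurable_const.indicator measurableSet_Icc
  have hgmeas : Measurable g := measurable_id.mul (hfmeas.sub hindmeas)
  have hhmeas : Measurable h := measurable_const.indicator measurableSet_Icc
  have hlow' : ∀ᵐ v : ℝ, v ∈ Ioo (0:ℝ) (ρ - ε) → f v = 1 :=
    (ae_restrict_iff' measurableSet_Ioo).mp hlow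
  have hhigh' : ∀ᵐ v : ℝ, v ∈ Ioo (ρ + ε) M → f v = 0 :=
    (ae_restrict_iff' measurableSet_Ioo).mp hhigh
  have hMne : ∀ᵐ v : ℝ, v ≠ M := by
    rw [ae_iff]
    have : {v : ℝ | ¬ v ≠ M} = {M} := by ext x; simp
    rw [this]; exact Real.volume_singleton
  have h0ne : ∀ᵐ v : ℝ, v ≠ 0 := by
    rw [ae_iff]
    have : {v : ℝ | ¬ v ≠ 0} = {(0:ℝ)} := by ext x; simp
    rw [this]; exact Real.volume_singleton
  have key : g ≤ᵐ[volume.restrict (Icc (0:ℝ) M)] h := by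
    filter_upwards [ae_restrict_mem measurableSet_Icc, ae_restrict_of_ae hlow',
      ae_restrict_of_ae hhigh', ae_restrict_of_ae hMne, ae_restrict_of_ae h0ne]
      with v hvI hl hr hvM hv0
    by_cases hc : v ∈ Icc (ρ-ε) (ρ+ε)
    · have hhv : h v = ρ + ε := by simp [hh, Set.indicator_of_mem hc]
      have h1 : f v - ind v ≤ 1 := by linarith [(hf01 v).2, hind0 v]
      calc g v = v * (f v - ind v) := rfl
        _ ≤ v * 1 := mul_le_mul_of_nonneg_left h1 hvI.1
        _ ≤ ρ + ε := by linarith [hc.2]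
        _ = h v := hhv.symm
    · have hhv : h v = 0 := by simp [hh, Set.indicator_of_notMem hc]
      rw [mem_Icc, not_and_or, not_le, not_le] at hc
      rcases hc with hc | hc
      · have hv0' : 0 < v := lt_of_le_of_ne hvI.1 (Ne.symm hv0)
        have hfv : f v = 1 := hl ⟨hv0', hc⟩
        have hiv : ind v = 1 := by
          have : v ∈ Icc (0:ℝ) ρ := ⟨hvI.1, by linarith⟩
          simp [hind, Set.indicator_of_mem this]
        simp [hg, hfv, hiv, hhv]
      · have hvM' : v < M := lt_of_le_of_ne hvI.2 hvM
        have hfv : f v = 0 := hr ⟨hc, hvM'⟩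
        have hiv : ind v = 0 := by
          have : v ∉ Icc (0:ℝ) ρ := by rw [mem_Icc, not_and_or]; right; push_neg; linarith
          simp [hind, Set.indicator_of_notMem this]
        simp [hg, hfv, hiv, hhv]
  have hgint : IntegrableOn g (Icc (0:ℝ) M) := by
    apply Integrable.mono' (integrable_const M) hgmeas.aestronglyMeasurable
    filter_upwards [ae_restrict_mem measurableSet_Icc] with v hv
    have habs : |f v - ind v| ≤ 1 := by
      rw [abs_le]; constructor <;> linarith [(hf01 v).1, (hf01 v).2, hind0 v, hind1 v]
    have hva : |v| ≤ M := abs_le.mpr ⟨by linarith [hv.1], hv.2⟩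
    calc ‖g v‖ = |v| * |f v - ind v| := by simp [hg, abs_mul]
      _ ≤ M * 1 := mul_le_mul hva habs (abs_nonneg _) (le_of_lt hM)
      _ = M := mul_one M
  have hhint : IntegrableOn h (Icc (0:ℝ) M) := by
    apply Integrable.mono' (integrable_const (ρ + ε)) hhmeas.aestronglyMeasurable
    filter_upwards with v
    by_cases hv : v ∈ Icc (ρ-ε) (ρ+ε) <;>
      simp [hh, Set.indicator_of_mem, Set.indicator_of_notMem, hv, abs_of_nonneg hρε0, hρε0]
  have step1 : (∫ v in Icc (0:ℝ) M, g v) ≤ ∫ v in Icc (0:ℝ) M, h v :=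
    integral_mono_ae hgint hhint key
  have step2 : (∫ v in Icc (0:ℝ) M, h v) ≤ (ρ + ε) * (2 * ε) := by
    rw [hh, integral_indicator measurableSet_Icc]
    rw [setIntegral_const]
    have hm : ((volume.restrict (Icc (0:ℝ) M)) (Icc (ρ-ε) (ρ+ε))).toReal ≤ 2 * ε := by
      have h1 : (volume.restrict (Icc (0:ℝ) M)) (Icc (ρ-ε) (ρ+ε)) ≤ volume (Icc (ρ-ε) (ρ+ε)) :=
        Measure.restrict_apply_le _ _
      have h2 : volume (Icc (ρ-ε) (ρ+ε)) = ENNReal.ofReal (2 * ε) := by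
        rw [Real.volume_Icc]; ring_nf
      calc ((volume.restrict (Icc (0:ℝ) M)) (Icc (ρ-ε) (ρ+ε))).toReal
          ≤ (volume (Icc (ρ-ε) (ρ+ε))).toReal := by
            apply ENNReal.toReal_mono _ h1
            rw [h2]; exact ENNReal.ofReal_ne_top
        _ = 2 * ε := by rw [h2, ENNReal.toReal_ofReal (by linarith)]
    calc ((volume.restrict (Icc (0:ℝ) M)) (Icc (ρ-ε) (ρ+ε))).toReal * (ρ + ε)
        ≤ (2 * ε) * (ρ + ε) := mul_le_mul_of_nonneg_right hm hρε0
      _ = (ρ + ε) * (2 * ε) := by ring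
  rw [hfmass]
  calc (∫ v in Icc (0:ℝ) M, g v) ≤ (ρ + ε) * (2 * ε) := le_trans step1 step2
    _ ≤ 4 * ε * ρ := by nlinarith
end

section
/- Let ε ∈ (0,1], M ≥ 2ε, ρ ∈ [ε, M - ε], N = ⌊ρ/ε⌋ ≥ 1, and η_ε(v) = ⌊v/ε⌋ + 1. Let f : [0,M] → [0,1] be measurable with ∫₀^M f = ρ. Then ∫₀^{Nε}(1 - f) dv ≤ ∫_{(N+1)ε}^M f dv + ε + (ρ - Nε) and, combining with Chebyshev bounds for η_ε, ∫₀^{Nε}(1 - f) dv + ∫_{(N+1)ε}^M f dv ≤ (2/ε)·∫₀^M η_ε (f - f_min) dv + 2∫_{(N+1)ε}^M f dv where f_min = 𝟙_{[0,Nε]} + ((ρ-Nε)/ε)𝟙_{[Nε,(N+1)ε]}. In particular the mass defect below level Nε is controlled by the mass excess above level (N+1)ε via mass conservation: ∫₀^{Nε}(1-f) dv = ∫_{Nε}^{(N+1)ε} f dv + ∫_{(N+1)ε}^M f dv - (ρ - Nε). -/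
open MeasureTheory Set

/-!
Put `a = Nε` and `b = (N+1)ε`. Splitting `∫₀^M f = ρ` at `a` and `b` gives the mass-balance
identity, and the first inequality follows from it since `∫_a^b f ≤ ε` and `ρ ≥ a`.
For the second, `f_min` has the same mass `ρ` as `f`, so `η` may be replaced by `η - (N+1)`,
which is `≤ -1` on `(0, a)`, `0` on `(a, b)` and `≥ 1` on `(b, M)`. As `f - f_min = f - 1 ≤ 0`
below `a` and `f - f_min = f ≥ 0` above `b`, the weighted integral `∫ η (f - f_min)` dominates
the defect `∫₀^a (1 - f)` plus the excess `∫_b^M f`; finally `2 / ε ≥ 1`.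
-/

theorem setIntegral_Icc_eq_intervalIntegral {f : ℝ → ℝ} {a b : ℝ} (hab : a ≤ b) :
    ∫ v in Icc a b, f v = ∫ v in a..b, f v := by
  rw [integral_Icc_eq_integral_Ioc, intervalIntegral.integral_of_le hab]

theorem intervalIntegrable_of_abs_le {f : ℝ → ℝ} {C a b : ℝ} (hf : Measurable f)
    (hC : ∀ v, |f v| ≤ C) : IntervalIntegrable f volume a b :=
  intervalIntegrable_const.mono_fun' hf.aestronglyMeasurable (ae_of_all _ hC)

theorem IntervalIntegrable.mul_of_abs_le {f g : ℝ → ℝ} {C a b : ℝ}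
    (hf : IntervalIntegrable f volume a b) (hg : Measurable g) (hC : ∀ v, |g v| ≤ C) :
    IntervalIntegrable (fun v => f v * g v) volume a b :=
  ⟨hf.1.mul_bdd hg.aestronglyMeasurable (ae_of_all _ hC),
    hf.2.mul_bdd hg.aestronglyMeasurable (ae_of_all _ hC)⟩

theorem IntervalIntegrable.mono_set_of_le {f : ℝ → ℝ} {a b c d : ℝ}
    (hf : IntervalIntegrable f volume a d) (hab : a ≤ b) (hbc : b ≤ c) (hcd : c ≤ d) :
    IntervalIntegrable f volume b c :=
  hf.mono_set (by
    rw [uIcc_of_le hbc, uIcc_of_le (hab.trans (hbc.trans hcd))]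
    exact Icc_subset_Icc hab hcd)

theorem integral_add_adjacent_intervals_three {f : ℝ → ℝ} {a b c d : ℝ}
    (hf : IntervalIntegrable f volume a d) (hab : a ≤ b) (hbc : b ≤ c) (hcd : c ≤ d) :
    (∫ v in a..b, f v) + (∫ v in b..c, f v) + ∫ v in c..d, f v = ∫ v in a..d, f v := by
  rw [intervalIntegral.integral_add_adjacent_intervals
      (hf.mono_set_of_le le_rfl hab (hbc.trans hcd)) (hf.mono_set_of_le hab hbc hcd),
    intervalIntegral.integral_add_adjacent_intervals
      (hf.mono_set_of_le le_rfl (hab.trans hbc) hcd) (hf.mono_set_of_le (hab.trans hbc) hcd le_rfl)]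

theorem integral_one_sub_eq_of_mass {f : ℝ → ℝ} {a b M : ℝ}
    (hf : IntervalIntegrable f volume 0 M) (ha : 0 ≤ a) (hab : a ≤ b) (hbM : b ≤ M) :
    ∫ v in 0..a, (1 - f v) =
      (∫ v in a..b, f v) + (∫ v in b..M, f v) - ((∫ v in 0..M, f v) - a) := by
  rw [intervalIntegral.integral_sub intervalIntegrable_const
      (hf.mono_set_of_le le_rfl ha (hab.trans hbM)),
    ← integral_add_adjacent_intervals_three hf ha hab hbM]
  simp only [intervalIntegral.integral_const, smul_eq_mul, mul_one, sub_zero]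
  ring

theorem integral_one_sub_add_integral_le_integral_mul_sub {f g η : ℝ → ℝ} {a b M L : ℝ}
    (ha : 0 ≤ a) (hab : a ≤ b) (hbM : b ≤ M)
    (hf : IntervalIntegrable f volume 0 M) (hg : IntervalIntegrable g volume 0 M)
    (hηfg : IntervalIntegrable (fun v => η v * (f v - g v)) volume 0 M)
    (hmass : ∫ v in 0..M, f v = ∫ v in 0..M, g v)
    (hlow : ∀ v ∈ Ioo 0 a, η v ≤ L - 1 ∧ g v = 1 ∧ f v ≤ 1)
    (hmid : ∀ v ∈ Ioo a b, η v = L)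
    (hhigh : ∀ v ∈ Ioo b M, L + 1 ≤ η v ∧ g v = 0 ∧ 0 ≤ f v) :
    (∫ v in 0..a, (1 - f v)) + ∫ v in b..M, f v ≤ ∫ v in 0..M, η v * (f v - g v) := by
  set ψ : ℝ → ℝ := fun v => η v * (f v - g v) - L * (f v - g v)
  have hfg : IntervalIntegrable (fun v => f v - g v) volume 0 M := hf.sub hg
  have hψ : IntervalIntegrable ψ volume 0 M := hηfg.sub (hfg.const_mul L)
  have hψ_eq : ∫ v in 0..M, ψ v = ∫ v in 0..M, η v * (f v - g v) := by
    rw [intervalIntegral.integral_sub hηfg (hfg.const_mul L), intervalIntegral.integral_const_mul,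
      intervalIntegral.integral_sub hf hg, hmass, sub_self, mul_zero, sub_zero]
  have hlow' : ∫ v in 0..a, (1 - f v) ≤ ∫ v in 0..a, ψ v :=
    intervalIntegral.integral_mono_on_of_le_Ioo ha
      (intervalIntegrable_const.sub (hf.mono_set_of_le le_rfl ha (hab.trans hbM)))
      (hψ.mono_set_of_le le_rfl ha (hab.trans hbM)) fun v hv => by
        obtain ⟨hη, hg1, hf1⟩ := hlow v hv
        simp only [ψ, hg1]
        nlinarith
  have hmid' : ∫ v in a..b, ψ v = 0 := by
    rw [intervalIntegral.integral_congr_Ioo_of_le hab (g := fun _ => 0) fun v hv => by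
      simp only [ψ, hmid v hv]; ring]
    simp
  have hhigh' : ∫ v in b..M, f v ≤ ∫ v in b..M, ψ v :=
    intervalIntegral.integral_mono_on_of_le_Ioo hbM (hf.mono_set_of_le (ha.trans hab) hbM le_rfl)
      (hψ.mono_set_of_le (ha.trans hab) hbM le_rfl) fun v hv => by
        obtain ⟨hη, hg0, hf0⟩ := hhigh v hv
        simp only [ψ, hg0]
        nlinarith
  rw [← hψ_eq, ← integral_add_adjacent_intervals_three hψ ha hab hbM]
  linarith

/-- The paper's `f_min` is `stepProfile (N * ε) ((N + 1) * ε) ((ρ - N * ε) / ε)`. -/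
noncomputable def stepProfile (a b c : ℝ) (v : ℝ) : ℝ :=
  (Icc 0 a).indicator (fun _ => 1) v + c * (Icc a b).indicator (fun _ => 1) v

section stepProfile

variable {a b c v : ℝ}

theorem stepProfile_of_mem_Ioo_zero (hv : v ∈ Ioo 0 a) : stepProfile a b c v = 1 := by
  simp [stepProfile, indicator_of_mem (Ioo_subset_Icc_self hv),
    indicator_of_notMem fun h : v ∈ Icc a b => hv.2.not_ge h.1]

theorem stepProfile_of_mem_Ioo (hv : v ∈ Ioo a b) : stepProfile a b c v = c := by
  simp [stepProfile, indicator_of_mem (Ioo_subset_Icc_self hv),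
    indicator_of_notMem fun h : v ∈ Icc 0 a => hv.1.not_ge h.2]

theorem stepProfile_of_lt (hab : a ≤ b) (hv : b < v) : stepProfile a b c v = 0 := by
  simp [stepProfile, indicator_of_notMem fun h : v ∈ Icc a b => hv.not_ge h.2,
    indicator_of_notMem fun h : v ∈ Icc 0 a => (hab.trans_lt hv).not_ge h.2]

theorem measurable_stepProfile : Measurable (stepProfile a b c) :=
  (measurable_const.indicator measurableSet_Icc).add
    (measurable_const.mul (measurable_const.indicator measurableSet_Icc))

theorem abs_stepProfile_le : |stepProfile a b c v| ≤ 1 + |c| := by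
  have h₁ : |(Icc 0 a).indicator (fun _ => (1 : ℝ)) v| ≤ 1 := by
    by_cases h : v ∈ Icc 0 a <;> simp [h]
  have h₂ : |(Icc a b).indicator (fun _ => (1 : ℝ)) v| ≤ 1 := by
    by_cases h : v ∈ Icc a b <;> simp [h]
  calc |stepProfile a b c v|
      ≤ |(Icc 0 a).indicator (fun _ => (1 : ℝ)) v|
          + |c| * |(Icc a b).indicator (fun _ => 1) v| :=
        (abs_add_le _ _).trans_eq (by rw [abs_mul])
    _ ≤ 1 + |c| * 1 := by gcongr
    _ = 1 + |c| := by ring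

theorem integral_stepProfile {M : ℝ} (ha : 0 ≤ a) (hab : a ≤ b) (hbM : b ≤ M) :
    ∫ v in 0..M, stepProfile a b c v = a + c * (b - a) := by
  have hint : IntervalIntegrable (stepProfile a b c) volume 0 M :=
    intervalIntegrable_of_abs_le measurable_stepProfile fun _ => abs_stepProfile_le
  rw [← integral_add_adjacent_intervals_three hint ha hab hbM,
    intervalIntegral.integral_congr_Ioo_of_le ha (g := fun _ => 1) fun v hv =>
      stepProfile_of_mem_Ioo_zero hv,
    intervalIntegral.integral_congr_Ioo_of_le hab (g := fun _ => c) fun v hv =>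
      stepProfile_of_mem_Ioo hv,
    intervalIntegral.integral_congr_Ioo_of_le hbM (g := fun _ => 0) fun v hv =>
      stepProfile_of_lt hab hv.1]
  simp only [intervalIntegral.integral_const, smul_eq_mul]
  ring

end stepProfile

theorem abs_le_one_of_mem_Icc {x : ℝ} (hx : x ∈ Icc (0 : ℝ) 1) : |x| ≤ 1 :=
  abs_le.2 ⟨by linarith [hx.1], hx.2⟩

theorem cast_floor_div_le_sub_one {ε v : ℝ} {k : ℤ} (hε : 0 < ε) (hv : v < k * ε) :
    (⌊v / ε⌋ : ℝ) ≤ k - 1 := by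
  exact_mod_cast Int.le_sub_one_of_lt (Int.floor_lt.2 ((div_lt_iff₀ hε).2 hv))

theorem le_cast_floor_div {ε v : ℝ} {k : ℤ} (hε : 0 < ε) (hv : k * ε ≤ v) :
    (k : ℝ) ≤ ⌊v / ε⌋ := by
  exact_mod_cast Int.le_floor.2 ((le_div_iff₀ hε).2 hv)

theorem monotone_floor_div_add_one {ε : ℝ} (hε : 0 < ε) :
    Monotone fun v : ℝ => (⌊v / ε⌋ : ℝ) + 1 := fun _ _ hxy =>
  add_le_add (Int.cast_mono (Int.floor_mono (div_le_div_of_nonneg_right hxy hε.le))) le_rfl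

theorem integral_one_sub_add_integral_le_integral_floor_mul_sub_stepProfile
    {ε M ρ : ℝ} {N : ℕ} {f : ℝ → ℝ} (hε : 0 < ε) (hbM : (N + 1) * ε ≤ M) (hfmeas : Measurable f)
    (hf01 : ∀ v, f v ∈ Icc (0 : ℝ) 1) (hfmass : ∫ v in 0..M, f v = ρ) :
    (∫ v in 0..N * ε, (1 - f v)) + ∫ v in (N + 1) * ε..M, f v ≤
      ∫ v in 0..M, ((⌊v / ε⌋ : ℝ) + 1) *
        (f v - stepProfile (N * ε) ((N + 1) * ε) ((ρ - N * ε) / ε) v) := by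
  have ha : 0 ≤ (N : ℝ) * ε := by positivity
  have hab : (N : ℝ) * ε ≤ (N + 1) * ε := by linarith
  have hf1 v : |f v| ≤ 1 := abs_le_one_of_mem_Icc (hf01 v)
  refine integral_one_sub_add_integral_le_integral_mul_sub (L := N + 1) ha hab hbM
    (intervalIntegrable_of_abs_le hfmeas hf1)
    (intervalIntegrable_of_abs_le measurable_stepProfile fun _ => abs_stepProfile_le)
    ((monotone_floor_div_add_one hε).intervalIntegrable.mul_of_abs_le
      (hfmeas.sub measurable_stepProfile) fun v =>
        (abs_sub _ _).trans (add_le_add (hf1 v) abs_stepProfile_le))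
    ?_ (fun v hv => ⟨?_, stepProfile_of_mem_Ioo_zero hv, (hf01 v).2⟩) (fun v hv => ?_)
    (fun v hv => ⟨?_, stepProfile_of_lt hab hv.1, (hf01 v).1⟩)
  · rw [hfmass, integral_stepProfile ha hab hbM]
    field_simp
    ring
  · have := cast_floor_div_le_sub_one (k := N) hε hv.2
    push_cast at this
    linarith
  · have h₁ := cast_floor_div_le_sub_one (k := N + 1) hε (by push_cast; exact hv.2)
    have h₂ := le_cast_floor_div (k := N) hε hv.1.le
    push_cast at h₁ h₂
    linarith
  · have := le_cast_floor_div (k := N + 1) hε (by push_cast; exact hv.1.le)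
    push_cast at this
    linarith

theorem stmt_14_general (ε M ρ : ℝ) (hε : 0 < ε) (hε1 : ε ≤ 1)
    (hρ : ρ ∈ Icc ε (M - ε))
    (N : ℕ) (hN : (N : ℤ) = ⌊ρ / ε⌋)
    (η : ℝ → ℝ) (hη : ∀ v, η v = (⌊v / ε⌋ : ℝ) + 1)
    (f : ℝ → ℝ) (hfmeas : Measurable f) (hf01 : ∀ v, f v ∈ Icc (0 : ℝ) 1)
    (hfmass : (∫ v in Icc (0 : ℝ) M, f v) = ρ)
    (fmin : ℝ → ℝ)
    (hfmin : ∀ v, fmin v = (Icc (0 : ℝ) ((N : ℝ) * ε)).indicator (fun _ => (1 : ℝ)) v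
      + ((ρ - N * ε) / ε) * (Icc ((N : ℝ) * ε) (((N : ℝ) + 1) * ε)).indicator (fun _ => (1 : ℝ)) v) :
    ((∫ v in Icc (0 : ℝ) ((N : ℝ) * ε), (1 - f v))
        ≤ (∫ v in Icc (((N : ℝ) + 1) * ε) M, f v) + ε + (ρ - N * ε)) ∧
    ((∫ v in Icc (0 : ℝ) ((N : ℝ) * ε), (1 - f v))
        + (∫ v in Icc (((N : ℝ) + 1) * ε) M, f v)
      ≤ (2 / ε) * (∫ v in Icc (0 : ℝ) M, η v * (f v - fmin v))
        + 2 * ∫ v in Icc (((N : ℝ) + 1) * ε) M, f v) ∧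
    ((∫ v in Icc (0 : ℝ) ((N : ℝ) * ε), (1 - f v))
      = (∫ v in Icc ((N : ℝ) * ε) (((N : ℝ) + 1) * ε), f v)
        + (∫ v in Icc (((N : ℝ) + 1) * ε) M, f v) - (ρ - N * ε)) := by
  obtain ⟨-, hρM⟩ := hρ
  rw [show η = fun v => (⌊v / ε⌋ : ℝ) + 1 from funext hη,
    show fmin = stepProfile (N * ε) ((N + 1) * ε) ((ρ - N * ε) / ε) from funext hfmin]
  set a : ℝ := N * ε
  set b : ℝ := (N + 1) * ε
  have ha : 0 ≤ a := by positivity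
  have haρ : a ≤ ρ := (le_div_iff₀ hε).1 (by exact_mod_cast Int.le_floor.1 hN.le)
  have hab : a ≤ b := by linarith
  have hbM : b ≤ M := by linarith
  simp only [setIntegral_Icc_eq_intervalIntegral ha, setIntegral_Icc_eq_intervalIntegral hab,
    setIntegral_Icc_eq_intervalIntegral hbM,
    setIntegral_Icc_eq_intervalIntegral (ha.trans (hab.trans hbM))] at hfmass ⊢
  have hf : IntervalIntegrable f volume 0 M :=
    intervalIntegrable_of_abs_le hfmeas fun v => abs_le_one_of_mem_Icc (hf01 v)
  have hbalance := integral_one_sub_eq_of_mass hf ha hab hbM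
  rw [hfmass] at hbalance
  have hmid_le : ∫ v in a..b, f v ≤ b - a := by
    simpa using intervalIntegral.integral_mono_on hab (hf.mono_set_of_le ha hab hbM)
      intervalIntegrable_const fun v _ => (hf01 v).2
  refine ⟨by linarith, ?_, hbalance⟩
  have hweight := integral_one_sub_add_integral_le_integral_floor_mul_sub_stepProfile hε hbM
    hfmeas hf01 hfmass
  have hdefect : 0 ≤ ∫ v in 0..a, (1 - f v) :=
    intervalIntegral.integral_nonneg ha fun v _ => by linarith [(hf01 v).2]
  have hexcess : 0 ≤ ∫ v in b..M, f v :=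
    intervalIntegral.integral_nonneg hbM fun v _ => (hf01 v).1
  have hscale : 1 ≤ 2 / ε := by rw [le_div_iff₀ hε]; linarith
  linarith [le_mul_of_one_le_left ((add_nonneg hdefect hexcess).trans hweight) hscale]

theorem stmt_14 (ε M ρ : ℝ) (hε : 0 < ε) (hε1 : ε ≤ 1) (hM : 2 * ε ≤ M)
    (hρ : ρ ∈ Icc ε (M - ε))
    (N : ℕ) (hN : (N : ℤ) = ⌊ρ / ε⌋) (hN1 : 1 ≤ N)
    (η : ℝ → ℝ) (hη : ∀ v, η v = (⌊v / ε⌋ : ℝ) + 1)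
    (f : ℝ → ℝ) (hfmeas : Measurable f) (hf01 : ∀ v, f v ∈ Icc (0 : ℝ) 1)
    (hfmass : (∫ v in Icc (0 : ℝ) M, f v) = ρ)
    (fmin : ℝ → ℝ)
    (hfmin : ∀ v, fmin v = (Icc (0 : ℝ) ((N : ℝ) * ε)).indicator (fun _ => (1 : ℝ)) v
      + ((ρ - N * ε) / ε) * (Icc ((N : ℝ) * ε) (((N : ℝ) + 1) * ε)).indicator (fun _ => (1 : ℝ)) v) :
    ((∫ v in Icc (0 : ℝ) ((N : ℝ) * ε), (1 - f v))
        ≤ (∫ v in Icc (((N : ℝ) + 1) * ε) M, f v) + ε + (ρ - N * ε)) ∧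
    ((∫ v in Icc (0 : ℝ) ((N : ℝ) * ε), (1 - f v))
        + (∫ v in Icc (((N : ℝ) + 1) * ε) M, f v)
      ≤ (2 / ε) * (∫ v in Icc (0 : ℝ) M, η v * (f v - fmin v))
        + 2 * ∫ v in Icc (((N : ℝ) + 1) * ε) M, f v) ∧
    ((∫ v in Icc (0 : ℝ) ((N : ℝ) * ε), (1 - f v))
      = (∫ v in Icc ((N : ℝ) * ε) (((N : ℝ) + 1) * ε), f v)
        + (∫ v in Icc (((N : ℝ) + 1) * ε) M, f v) - (ρ - N * ε)) :=
  stmt_14_general ε M ρ hε hε1 hρ N hN η hη f hfmeas hf01 hfmass fmin hfmin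
end
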